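/- Let g = (g₁,g₂,g₃) be integers and let (p,q,r) be a phase. Write p−g₁ = s₁·a₁ + p′ with 0 ≤ p′ < s₁, q−g₂ = s₂·a₂ + q′ with 0 ≤ q′ < s₂, and r−g₃ = s₃·a₃ + r′ with 0 ≤ r′ < s₃ (a₁,a₂,a₃ ∈ ℤ). Then for every volume X and all coarse-grid indices (i,j,k), Ψ(T_g X)_{(p,q,r)}(i,j,k) = Ψ(X)_{(p′,q′,r′)}(i+a₁, j+a₂, k+a₃); equivalently, Ψ(T_g X)_{(p,q,r)} = T_{(−a₁,−a₂,−a₃)} Ψ(X)_{(p′,q′,r′)} as functions on the coarse grid. -/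

import Mathlib

noncomputable section

/-- The well-defined map `ZMod n → ZMod (n*s)` induced by `a ↦ s*a + p`. -/
def phaseEmb (n s : ℕ) (p : ℤ) (i : ZMod n) : ZMod (n * s) :=
  (s : ZMod (n * s)) * (i.val : ZMod (n * s)) + (p : ZMod (n * s))

/-- Circular translation of a volume by an integer vector `g`:
`(T_g X)(i,j,k) = X(i-g₁, j-g₂, k-g₃)`. -/
def Tvol {D H W : ℕ} (g : ℤ × ℤ × ℤ) (X : ZMod D × ZMod H × ZMod W → ℝ) :
    ZMod D × ZMod H × ZMod W → ℝ :=
  fun v => X (v.1 - (g.1 : ZMod D), v.2.1 - (g.2.1 : ZMod H), v.2.2 - (g.2.2 : ZMod W))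

/-- Circular translation on the coarse grid. -/
def Tcoarse {n₁ n₂ n₃ : ℕ} (h : ℤ × ℤ × ℤ) (Y : ZMod n₁ × ZMod n₂ × ZMod n₃ → ℝ) :
    ZMod n₁ × ZMod n₂ × ZMod n₃ → ℝ :=
  fun v => Y (v.1 - (h.1 : ZMod n₁), v.2.1 - (h.2.1 : ZMod n₂), v.2.2 - (h.2.2 : ZMod n₃))

/-- Polyphase component `Ψ(X)_{(p,q,r)}(i,j,k) = X(s₁·i+p, s₂·j+q, s₃·k+r)`. -/
def Psi (s₁ s₂ s₃ n₁ n₂ n₃ : ℕ) (p q r : ℤ)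
    (X : ZMod (n₁ * s₁) × ZMod (n₂ * s₂) × ZMod (n₃ * s₃) → ℝ) :
    ZMod n₁ × ZMod n₂ × ZMod n₃ → ℝ :=
  fun v => X (phaseEmb n₁ s₁ p v.1, phaseEmb n₂ s₂ q v.2.1, phaseEmb n₃ s₃ r v.2.2)

/-! Since `i ↦ s * i.val` is additive from `ZMod n` to `ZMod (n * s)`, shifting the fine index
`s * i + p` by `-g = s * a + p' - p` gives `s * (i + a) + p'`, coordinatewise. -/

theorem ZMod.natCast_mul_val_eq_of_intCast_eq {n : ℕ} [NeZero n] (s : ℕ) {x : ZMod n} {m : ℤ}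
    (h : (m : ZMod n) = x) :
    (s : ZMod (n * s)) * (x.val : ZMod (n * s)) = s * m := by
  obtain ⟨k, hk⟩ : (n : ℤ) ∣ m - x.val := by
    rw [← ZMod.intCast_eq_intCast_iff_dvd_sub, Int.cast_natCast, ZMod.natCast_zmod_val, h]
  have hns : (n : ZMod (n * s)) * s = 0 := by exact_mod_cast ZMod.natCast_self (n * s)
  have hk' := congrArg (Int.cast : ℤ → ZMod (n * s)) hk
  push_cast at hk'
  linear_combination -(s : ZMod (n * s)) * hk' - k * hns

theorem phaseEmb_sub_intCast {n : ℕ} [NeZero n] (s : ℕ) {p g p' a : ℤ}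
    (h : p - g = s * a + p') (i : ZMod n) :
    phaseEmb n s p i - g = phaseEmb n s p' (i + a) := by
  have hval := ZMod.natCast_mul_val_eq_of_intCast_eq s (m := i.val + a) (x := i + (a : ZMod n))
    (by simp)
  have hp := congrArg (Int.cast : ℤ → ZMod (n * s)) h
  push_cast at hp hval
  unfold phaseEmb
  linear_combination hp - hval

theorem Psi_Tvol_apply {s₁ s₂ s₃ n₁ n₂ n₃ : ℕ} [NeZero n₁] [NeZero n₂] [NeZero n₃]
    {g₁ g₂ g₃ p q r p' q' r' a₁ a₂ a₃ : ℤ}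
    (hdec₁ : p - g₁ = s₁ * a₁ + p') (hdec₂ : q - g₂ = s₂ * a₂ + q')
    (hdec₃ : r - g₃ = s₃ * a₃ + r')
    (X : ZMod (n₁ * s₁) × ZMod (n₂ * s₂) × ZMod (n₃ * s₃) → ℝ)
    (i : ZMod n₁) (j : ZMod n₂) (k : ZMod n₃) :
    Psi s₁ s₂ s₃ n₁ n₂ n₃ p q r (Tvol (g₁, g₂, g₃) X) (i, j, k)
      = Psi s₁ s₂ s₃ n₁ n₂ n₃ p' q' r' X (i + a₁, j + a₂, k + a₃) := by
  simp only [Psi, Tvol, phaseEmb_sub_intCast s₁ hdec₁, phaseEmb_sub_intCast s₂ hdec₂,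
    phaseEmb_sub_intCast s₃ hdec₃]

theorem polyphase_decomposition_translation_general
    (s₁ s₂ s₃ n₁ n₂ n₃ : ℕ)
    (hn₁ : 0 < n₁) (hn₂ : 0 < n₂) (hn₃ : 0 < n₃)
    (g₁ g₂ g₃ p q r p' q' r' a₁ a₂ a₃ : ℤ)
    (hdec₁ : p - g₁ = (s₁ : ℤ) * a₁ + p')
    (hdec₂ : q - g₂ = (s₂ : ℤ) * a₂ + q')
    (hdec₃ : r - g₃ = (s₃ : ℤ) * a₃ + r')
    (X : ZMod (n₁ * s₁) × ZMod (n₂ * s₂) × ZMod (n₃ * s₃) → ℝ) :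
    (∀ (i : ZMod n₁) (j : ZMod n₂) (k : ZMod n₃),
      Psi s₁ s₂ s₃ n₁ n₂ n₃ p q r (Tvol (g₁, g₂, g₃) X) (i, j, k)
        = Psi s₁ s₂ s₃ n₁ n₂ n₃ p' q' r' X
            (i + (a₁ : ZMod n₁), j + (a₂ : ZMod n₂), k + (a₃ : ZMod n₃)))
    ∧ Psi s₁ s₂ s₃ n₁ n₂ n₃ p q r (Tvol (g₁, g₂, g₃) X)
        = Tcoarse (-a₁, -a₂, -a₃) (Psi s₁ s₂ s₃ n₁ n₂ n₃ p' q' r' X) := by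
  have : NeZero n₁ := ⟨hn₁.ne'⟩
  have : NeZero n₂ := ⟨hn₂.ne'⟩
  have : NeZero n₃ := ⟨hn₃.ne'⟩
  refine ⟨Psi_Tvol_apply hdec₁ hdec₂ hdec₃ X, funext fun ⟨i, j, k⟩ => ?_⟩
  simpa only [Tcoarse, Int.cast_neg, sub_neg_eq_add] using Psi_Tvol_apply hdec₁ hdec₂ hdec₃ X i j k

/-- Polyphase decomposition intertwines circular translations:
if `p - g₁ = s₁·a₁ + p'` with `0 ≤ p' < s₁` (and similarly in the other axes), then
`Ψ(T_g X)_{(p,q,r)}(i,j,k) = Ψ(X)_{(p',q',r')}(i+a₁, j+a₂, k+a₃)`, equivalently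
`Ψ(T_g X)_{(p,q,r)} = T_{(-a₁,-a₂,-a₃)} Ψ(X)_{(p',q',r')}` on the coarse grid. -/
theorem polyphase_decomposition_translation
    (s₁ s₂ s₃ n₁ n₂ n₃ : ℕ)
    (hs₁ : 0 < s₁) (hs₂ : 0 < s₂) (hs₃ : 0 < s₃)
    (hn₁ : 0 < n₁) (hn₂ : 0 < n₂) (hn₃ : 0 < n₃)
    (g₁ g₂ g₃ p q r p' q' r' a₁ a₂ a₃ : ℤ)
    (hp0 : 0 ≤ p) (hps : p < (s₁ : ℤ))
    (hq0 : 0 ≤ q) (hqs : q < (s₂ : ℤ))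
    (hr0 : 0 ≤ r) (hrs : r < (s₃ : ℤ))
    (hdec₁ : p - g₁ = (s₁ : ℤ) * a₁ + p') (hp'0 : 0 ≤ p') (hp's : p' < (s₁ : ℤ))
    (hdec₂ : q - g₂ = (s₂ : ℤ) * a₂ + q') (hq'0 : 0 ≤ q') (hq's : q' < (s₂ : ℤ))
    (hdec₃ : r - g₃ = (s₃ : ℤ) * a₃ + r') (hr'0 : 0 ≤ r') (hr's : r' < (s₃ : ℤ))
    (X : ZMod (n₁ * s₁) × ZMod (n₂ * s₂) × ZMod (n₃ * s₃) → ℝ) :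
    (∀ (i : ZMod n₁) (j : ZMod n₂) (k : ZMod n₃),
      Psi s₁ s₂ s₃ n₁ n₂ n₃ p q r (Tvol (g₁, g₂, g₃) X) (i, j, k)
        = Psi s₁ s₂ s₃ n₁ n₂ n₃ p' q' r' X
            (i + (a₁ : ZMod n₁), j + (a₂ : ZMod n₂), k + (a₃ : ZMod n₃)))
    ∧ Psi s₁ s₂ s₃ n₁ n₂ n₃ p q r (Tvol (g₁, g₂, g₃) X)
        = Tcoarse (-a₁, -a₂, -a₃) (Psi s₁ s₂ s₃ n₁ n₂ n₃ p' q' r' X) :=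
  polyphase_decomposition_translation_general s₁ s₂ s₃ n₁ n₂ n₃ hn₁ hn₂ hn₃ g₁ g₂ g₃ p q r p' q' r'
    a₁ a₂ a₃ hdec₁ hdec₂ hdec₃ X
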